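/- Let B be a finite set with at least three elements and let X be any set. The map sending an ultrafilter U on X to the function (f : X → B) ↦ ∫_X f dU is a bijection from the set of ultrafilters on X onto the set of functions I : (X → B) → B that are equivariant for the action of the endomorphism monoid End(B) by postcomposition, i.e., such that I(θ ∘ f) = θ(I(f)) for all θ : B → B and all f : X → B. -/

import Mathlib

universe u

namespace Stmt2Aux

open Classical in
/-- characteristic function of a set with values `b1` (in) and `b0` (out). -/
noncomputable def chi {X B : Type u} (b0 b1 : B) (A : Set X) : X → B :=
  fun x => if x ∈ A then b1 else b0

section

variable {X B : Type u} [Finite B]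

noncomputable def intU (U : Ultrafilter X) (f : X → B) : B :=
  Classical.choose (Ultrafilter.eq_pure_of_finite (U.map f))

lemma intU_spec (U : Ultrafilter X) (f : X → B) : f ⁻¹' {intU U f} ∈ U := by
  have h := Classical.choose_spec (Ultrafilter.eq_pure_of_finite (U.map f))
  have h2 : ({intU U f} : Set B) ∈ U.map f := by
    rw [h]; exact Ultrafilter.mem_pure.2 rfl
  exact Ultrafilter.mem_map.1 h2

lemma intU_eq (U : Ultrafilter X) (f : X → B) (b : B) (hb : f ⁻¹' {b} ∈ U) :
    intU U f = b := by
  by_contra hne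
  have hmem := Filter.inter_mem (intU_spec U f) hb
  have hempty : f ⁻¹' {intU U f} ∩ f ⁻¹' {b} = ∅ := by
    ext x
    simp only [Set.mem_inter_iff, Set.mem_preimage, Set.mem_singleton_iff,
      Set.mem_empty_iff_false, iff_false, not_and]
    intro h1 h2
    exact hne (h1.symm.trans h2)
  rw [hempty] at hmem
  exact Filter.empty_notMem (U : Filter X) hmem

end

end Stmt2Aux

open Stmt2Aux in
/-- Let `B` be a finite set with at least three elements and `X` any set.  The map
sending an ultrafilter `U` on `X` to the function `(f : X → B) ↦ ∫_X f dU` (the unique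
`b : B` with `f ⁻¹' {b} ∈ U`) is a bijection from the set of ultrafilters on `X` onto the
set of functions `I : (X → B) → B` that are equivariant for the action of the
endomorphism monoid `End(B)` by postcomposition. -/
theorem stmt2 (X : Type u) (B : Type u) [Finite B] (hB : 3 ≤ Nat.card B) :
    ∃ Φ : Ultrafilter X ≃
        {I : (X → B) → B // ∀ (θ : Function.End B) (f : X → B), I (θ ∘ f) = θ (I f)},
      ∀ (U : Ultrafilter X) (f : X → B), f ⁻¹' {(Φ U).1 f} ∈ U := by
  classical
  have hpos : Nat.card B ≠ 0 := by omega
  let e := Nat.equivFinOfCardPos hpos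
  set b0 : B := e.symm ⟨0, by omega⟩ with hb0
  set b1 : B := e.symm ⟨1, by omega⟩ with hb1
  set b2 : B := e.symm ⟨2, by omega⟩ with hb2
  have h01 : b0 ≠ b1 := by
    simp only [hb0, hb1, ne_eq, EmbeddingLike.apply_eq_iff_eq, Fin.mk.injEq]; omega
  have h02 : b0 ≠ b2 := by
    simp only [hb0, hb2, ne_eq, EmbeddingLike.apply_eq_iff_eq, Fin.mk.injEq]; omega
  have h12 : b1 ≠ b2 := by
    simp only [hb1, hb2, ne_eq, EmbeddingLike.apply_eq_iff_eq, Fin.mk.injEq]; omega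
  -- the forward map
  let toFun : Ultrafilter X →
      {I : (X → B) → B // ∀ (θ : Function.End B) (f : X → B), I (θ ∘ f) = θ (I f)} :=
    fun U => ⟨intU U, by
      intro θ f
      apply intU_eq
      have hsub : f ⁻¹' {intU U f} ⊆ (θ ∘ f) ⁻¹' {θ (intU U f)} := by
        intro x hx
        simp only [Set.mem_preimage, Set.mem_singleton_iff] at hx ⊢
        simp [Function.comp, hx]
      exact Filter.mem_of_superset (intU_spec U f) hsub⟩
  -- injectivity
  have hinj : Function.Injective toFun := by
    intro U V h
    have h' : ∀ f : X → B, intU U f = intU V f := fun f =>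
      congrFun (congrArg Subtype.val h) f
    ext A
    constructor
    · intro hA
      have hU : intU U (chi b0 b1 A) = b1 := by
        apply intU_eq
        have : chi b0 b1 A ⁻¹' {b1} = A := by
          ext x; simp [chi, h01]
        rwa [this]
      by_contra hV
      have hVc : Aᶜ ∈ V := Ultrafilter.compl_mem_iff_notMem.2 hV
      have hV0 : intU V (chi b0 b1 A) = b0 := by
        apply intU_eq
        have : chi b0 b1 A ⁻¹' {b0} = Aᶜ := by
          ext x; simp [chi, h01.symm]
        rwa [this]
      rw [h'] at hU
      exact h01 (hV0.symm.trans hU)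
    · intro hA
      have hV : intU V (chi b0 b1 A) = b1 := by
        apply intU_eq
        have : chi b0 b1 A ⁻¹' {b1} = A := by
          ext x; simp [chi, h01]
        rwa [this]
      by_contra hU
      have hUc : Aᶜ ∈ U := Ultrafilter.compl_mem_iff_notMem.2 hU
      have hU0 : intU U (chi b0 b1 A) = b0 := by
        apply intU_eq
        have : chi b0 b1 A ⁻¹' {b0} = Aᶜ := by
          ext x; simp [chi, h01.symm]
        rwa [this]
      rw [h'] at hU0
      exact h01 (hU0.symm.trans hV)
  -- surjectivity
  have hsurj : Function.Surjective toFun := by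
    rintro ⟨I, hI⟩
    -- basic facts about I
    have hconst : ∀ c : B, I (fun _ => c) = c := by
      intro c
      have := hI (fun _ => c : Function.End B) (fun _ => b0)
      exact this
    have hrange : ∀ f : X → B, I f ∈ Set.range f := by
      intro f
      by_contra hbr
      set b := I f with hbdef
      set b' : B := if b = b0 then b1 else b0 with hb'
      have hb'b : b' ≠ b := by
        by_cases h : b = b0
        · rw [hb']; simp [h, h01.symm]
        · rw [hb']; simpa [h] using Ne.symm h
      set θ : Function.End B := fun c => if c = b then b' else c with hθ
      have hθf : θ ∘ f = f := by
        funext x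
        have : f x ≠ b := fun hc => hbr ⟨x, hc⟩
        simp [hθ, Function.comp, this]
      have := hI θ f
      rw [hθf] at this
      have : b = b' := by
        rw [hbdef] at *
        rw [this, hθ]; simp
      exact hb'b this.symm
    -- membership predicate
    set memF : Set X → Prop := fun A => I (chi b0 b1 A) = b1 with hmemF
    have memF_iff : ∀ A : Set X, memF A ↔ I (chi b0 b1 A) = b1 := fun A => Iff.rfl
    have hchi_range : ∀ A : Set X, I (chi b0 b1 A) = b0 ∨ I (chi b0 b1 A) = b1 := by
      intro A
      rcases hrange (chi b0 b1 A) with ⟨x, hx⟩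
      by_cases h : x ∈ A
      · right; rw [← hx]; simp [chi, h]
      · left; rw [← hx]; simp [chi, h]
    -- complement dichotomy
    have hcompl : ∀ A : Set X, memF Aᶜ ↔ ¬ memF A := by
      intro A
      have hcomp : chi b0 b1 Aᶜ = (fun c => if c = b1 then b0 else b1) ∘ chi b0 b1 A := by
        funext x
        by_cases h : x ∈ A <;> simp [chi, h, h01, h01.symm]
      have hstep : I (chi b0 b1 Aᶜ) = if I (chi b0 b1 A) = b1 then b0 else b1 := by
        rw [hcomp]
        exact hI (fun c => if c = b1 then b0 else b1 : Function.End B) (chi b0 b1 A)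
      rw [memF_iff, memF_iff]
      constructor
      · intro h hA
        rw [hstep, if_pos hA] at h
        exact h01 h
      · intro h
        rw [hstep, if_neg h]
    -- upward closure
    have hup : ∀ A A' : Set X, A ⊆ A' → memF A → memF A' := by
      intro A A' hAA' hA
      set g : X → B := fun x => if x ∈ A then b1 else if x ∈ A' then b2 else b0 with hg
      have hgA : chi b0 b1 A = (fun c => if c = b1 then b1 else b0) ∘ g := by
        funext x
        by_cases h : x ∈ A
        · simp [chi, g, h]
        · by_cases h' : x ∈ A' <;>
            simp [chi, g, h, h', h01, h02, h12, h01.symm, h02.symm, h12.symm]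
      have hgA' : chi b0 b1 A' = (fun c => if c = b0 then b0 else b1) ∘ g := by
        funext x
        by_cases h : x ∈ A
        · simp [chi, g, h, hAA' h, h01.symm]
        · by_cases h' : x ∈ A' <;>
            simp [chi, g, h, h', h01, h02, h12, h01.symm, h02.symm, h12.symm]
      have h1 : I (chi b0 b1 A) = if I g = b1 then b1 else b0 := by
        rw [hgA]; exact hI _ g
      have h2 : I (chi b0 b1 A') = if I g = b0 then b0 else b1 := by
        rw [hgA']; exact hI _ g
      rw [memF_iff] at hA ⊢
      rw [h1] at hA
      have hgb1 : I g = b1 := by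
        by_contra hc
        rw [if_neg hc] at hA
        exact h01 hA
      rw [h2, hgb1, if_neg h01.symm]
    -- primality for disjoint sets
    have hprime : ∀ C D : Set X, Disjoint C D → memF (C ∪ D) → memF C ∨ memF D := by
      intro C D hCD hCD'
      set g : X → B := fun x => if x ∈ C then b1 else if x ∈ D then b2 else b0 with hg
      have hgCD : chi b0 b1 (C ∪ D) = (fun c => if c = b0 then b0 else b1) ∘ g := by
        funext x
        by_cases h : x ∈ C
        · simp [chi, g, h, h01.symm]
        · by_cases h' : x ∈ D <;>
            simp [chi, g, h, h', h01, h02, h12, h01.symm, h02.symm, h12.symm]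
      have hne0 : I g ≠ b0 := by
        intro hc
        rw [memF_iff, hgCD] at hCD'
        have h3 : (if I g = b0 then b0 else b1) = b1 :=
          (hI (fun c => if c = b0 then b0 else b1 : Function.End B) g).symm.trans hCD'
        rw [hc, if_pos rfl] at h3
        exact h01 h3
      have hg_range : I g = b0 ∨ I g = b1 ∨ I g = b2 := by
        rcases hrange g with ⟨x, hx⟩
        by_cases h : x ∈ C
        · right; left; rw [← hx]; simp [g, h]
        · by_cases h' : x ∈ D
          · right; right; rw [← hx]; simp [g, h, h']
          · left; rw [← hx]; simp [g, h, h']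
      rcases hg_range with h | h | h
      · exact absurd h hne0
      · left
        have hgC : chi b0 b1 C = (fun c => if c = b1 then b1 else b0) ∘ g := by
          funext x
          by_cases hx : x ∈ C
          · simp [chi, g, hx]
          · by_cases hx' : x ∈ D <;>
              simp [chi, g, hx, hx', h01, h02, h12, h01.symm, h02.symm, h12.symm]
        rw [memF_iff, hgC]
        exact (hI (fun c => if c = b1 then b1 else b0 : Function.End B) g).trans
          (show (if I g = b1 then b1 else b0) = b1 by rw [h, if_pos rfl])
      · right
        have hgD : chi b0 b1 D = (fun c => if c = b2 then b1 else b0) ∘ g := by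
          funext x
          by_cases hx : x ∈ C
          · have : x ∉ D := fun hd => (hCD.ne_of_mem hx hd) rfl
            simp [chi, g, hx, this, h12]
          · by_cases hx' : x ∈ D <;>
              simp [chi, g, hx, hx', h01, h02, h12, h01.symm, h02.symm, h12.symm]
        rw [memF_iff, hgD]
        exact (hI (fun c => if c = b2 then b1 else b0 : Function.End B) g).trans
          (show (if I g = b2 then b1 else b0) = b1 by rw [h, if_pos rfl])
    -- build the filter
    have huniv : memF Set.univ := by
      rw [memF_iff]
      have : chi b0 b1 (Set.univ : Set X) = fun _ => b1 := by
        funext x; simp [chi]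
      rw [this, hconst]
    have hnotboth : ∀ A : Set X, memF A → memF Aᶜ → False := by
      intro A hA hAc
      exact (hcompl A).1 hAc hA
    have hinter : ∀ A A' : Set X, memF A → memF A' → memF (A ∩ A') := by
      intro A A' hA hA'
      by_contra hc
      have hcc : memF (A ∩ A')ᶜ := (hcompl _).2 hc
      have hun : (A ∩ A')ᶜ = Aᶜ ∪ (A'ᶜ ∩ A) := by
        ext x
        simp only [Set.mem_compl_iff, Set.mem_inter_iff, Set.mem_union, not_and]
        tauto
      rw [hun] at hcc
      have hdisj : Disjoint (Aᶜ) (A'ᶜ ∩ A) := by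
        rw [Set.disjoint_left]
        intro x hx hx'
        exact hx hx'.2
      rcases hprime _ _ hdisj hcc with h | h
      · exact hnotboth A hA h
      · have : memF A'ᶜ := hup _ _ (Set.inter_subset_left) h
        exact hnotboth A' hA' this
    let F : Filter X :=
      { sets := {A | memF A}
        univ_sets := huniv
        sets_of_superset := fun hA hAA' => hup _ _ hAA' hA
        inter_sets := fun hA hA' => hinter _ _ hA hA' }
    have hFmem : ∀ A : Set X, A ∈ F ↔ memF A := fun A => Iff.rfl
    let U : Ultrafilter X := Ultrafilter.ofComplNotMemIff F (by
      intro s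
      constructor
      · intro h
        rcases hchi_range s with h0 | h1
        · exfalso
          apply h
          rw [hFmem]
          exact (hcompl s).2 (fun hs => h01 (h0.symm.trans hs))
        · exact h1
      · intro hs hsc
        exact hnotboth s hs hsc)
    have hUmem : ∀ A : Set X, A ∈ U ↔ memF A := fun A => Iff.rfl
    refine ⟨U, ?_⟩
    apply Subtype.ext
    funext f
    show intU U f = I f
    apply intU_eq
    rw [hUmem]
    have hkey : chi b0 b1 (f ⁻¹' {I f}) = (fun c => if c = I f then b1 else b0) ∘ f := by
      funext x
      by_cases h : f x = I f <;> simp [chi, h]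
    rw [memF_iff, hkey]
    exact (hI (fun c => if c = I f then b1 else b0 : Function.End B) f).trans
      (show (if I f = I f then b1 else b0) = b1 by simp)
  refine ⟨Equiv.ofBijective toFun ⟨hinj, hsurj⟩, ?_⟩
  intro U f
  exact intU_spec U f
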